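/- arXiv:2402.04823 — 2 statements merged into one kernel-verified Lean document; each statement's English description precedes it below -/
import Mathlib

section
/- Let Π be a satisfiable finite set of linear constraints over ℝ^D in which every constraint is non-strict (every relation is ≥), with variables taken in the order x_1, …, x_D. Then for every x̃ ∈ ℝ^D, the point z ∈ ℝ^D defined recursively by z_i = min(max(x̃_i, lb_i), ub_i), where ub_i = min{ε^φ_i(z) : φ ∈ Π⁻_i} (min of the empty set is +∞) and lb_i = max{ε^φ_i(z) : φ ∈ Π⁺_i} (max of the empty set is −∞) depend only on z_1, …, z_{i−1}, satisfies Π. -/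
open scoped BigOperators

/-- A linear constraint `∑ k, w k * x k + b ⊵ 0` over `ℝ^D`; `⊵` is `>` when
`strict = true` and `≥` when `strict = false`. -/
structure LinConstr (D : ℕ) where
  w : Fin D → ℝ
  b : ℝ
  strict : Bool

namespace LinConstr

variable {D : ℕ}

/-- `x` satisfies the linear constraint `φ`. -/
def Sat (φ : LinConstr D) (x : Fin D → ℝ) : Prop :=
  if φ.strict then 0 < (∑ k, φ.w k * x k) + φ.b
  else 0 ≤ (∑ k, φ.w k * x k) + φ.b

/-- `x` satisfies every constraint in the set `Γ`. -/
def SatSet (Γ : Set (LinConstr D)) (x : Fin D → ℝ) : Prop :=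
  ∀ φ ∈ Γ, φ.Sat x

/-- The reduction `red_j(φ1, φ2)` of `φ1` (where `x_j` appears negatively) and
`φ2` (where `x_j` appears positively) over the variable `x_j`. -/
def red (j : Fin D) (φ1 φ2 : LinConstr D) : LinConstr D where
  w := fun k => if k = j then 0 else φ1.w k * |φ2.w j| + φ2.w k * |φ1.w j|
  b := φ1.b * |φ2.w j| + φ2.b * |φ1.w j|
  strict := φ1.strict || φ2.strict

/-- `ε^φ_j(x) = −∑_{k≠j} (w_k/w_j)·x_k − b/w_j`. -/
noncomputable def eps (φ : LinConstr D) (j : Fin D) (x : Fin D → ℝ) : ℝ :=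
  -(∑ k ∈ Finset.univ.erase j, (φ.w k / φ.w j) * x k) - φ.b / φ.w j

/-- The constraints of `S` in which `x_j` appears negatively. -/
def negSet (j : Fin D) (S : Set (LinConstr D)) : Set (LinConstr D) :=
  {φ ∈ S | φ.w j < 0}

/-- The constraints of `S` in which `x_j` appears positively. -/
def posSet (j : Fin D) (S : Set (LinConstr D)) : Set (LinConstr D) :=
  {φ ∈ S | 0 < φ.w j}

/-- Elimination of the variable `x_j` from the set `S` (Fourier–Motzkin step). -/
def elim (j : Fin D) (S : Set (LinConstr D)) : Set (LinConstr D) :=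
  (S \ (negSet j S ∪ posSet j S)) ∪
    {ψ | ∃ φ1 ∈ negSet j S, ∃ φ2 ∈ posSet j S, ψ = red j φ1 φ2}

/-- `PiAt Γ i` is the paper's `Π_{i+1}` (0-based indexing of the coordinates):
`PiAt Γ (D−1) = Γ` and `PiAt Γ i = elim_{x_{i+1}} (PiAt Γ (i+1))`. -/
def PiAt (Γ : Set (LinConstr D)) (i : ℕ) : Set (LinConstr D) :=
  if h : i + 1 < D then elim ⟨i + 1, h⟩ (PiAt Γ (i + 1)) else Γ
termination_by D - i
decreasing_by omega

/-- The least upper bound `ub_i = min {ε^φ_i(x) : φ ∈ S⁻_i}` (`+∞` if empty). -/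
noncomputable def ubE (S : Set (LinConstr D)) (i : Fin D) (x : Fin D → ℝ) : EReal :=
  sInf ((fun φ => ((eps φ i x : ℝ) : EReal)) '' negSet i S)

/-- The greatest lower bound `lb_i = max {ε^φ_i(x) : φ ∈ S⁺_i}` (`−∞` if empty). -/
noncomputable def lbE (S : Set (LinConstr D)) (i : Fin D) (x : Fin D → ℝ) : EReal :=
  sSup ((fun φ => ((eps φ i x : ℝ) : EReal)) '' posSet i S)

/-- Some strict constraint of `S` attains the value `v` at `x` (via `ε^φ_i`). -/
def StrictHit (S : Set (LinConstr D)) (i : Fin D) (x : Fin D → ℝ) (v : EReal) : Prop :=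
  ∃ φ ∈ S, φ.strict = true ∧ ((eps φ i x : ℝ) : EReal) = v

/-- The `max^i`-style adjustment: `r = v` unless a strict constraint attains `v`
(`hit`), in which case `r = v + e` for the chosen `e > 0` with `L + e ≤ U`. -/
def AdjUp (hit : Prop) (v L U : EReal) (e : ℝ) (r : EReal) : Prop :=
  (¬ hit ∧ e = 0 ∧ r = v) ∨
  (hit ∧ 0 < e ∧ L + (e : EReal) ≤ U ∧ r = v + (e : EReal))

/-- The `min^i`-style adjustment: `r = v` unless a strict constraint attains `v`
(`hit`), in which case `r = v − e` for the chosen `e > 0` with `L ≤ U − e`. -/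
def AdjDown (hit : Prop) (v L U : EReal) (e : ℝ) (r : EReal) : Prop :=
  (¬ hit ∧ e = 0 ∧ r = v) ∨
  (hit ∧ 0 < e ∧ L ≤ U - (e : EReal) ∧ r = v - (e : EReal))

/-- The `i`-th step of the constraint-layer computation, with the `ε` values
`e1` (for `max^i`) and `e2` (for `min^i`) made explicit:
`z_i = min^i(max^i(x̃_i, lb_i), ub_i)`, where the bounds are computed from
`Π_i = PiAt Γ i` at the (previously computed) coordinates of `z`. -/
def IsCLStepE (Γ : Set (LinConstr D)) (xt z : Fin D → ℝ) (e1 e2 : ℝ) (i : Fin D) : Prop :=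
  ∃ a : EReal,
    AdjUp (StrictHit (posSet i (PiAt Γ i.1)) i z
        (max ((xt i : ℝ) : EReal) (lbE (PiAt Γ i.1) i z)))
      (max ((xt i : ℝ) : EReal) (lbE (PiAt Γ i.1) i z))
      (lbE (PiAt Γ i.1) i z) (ubE (PiAt Γ i.1) i z) e1 a ∧
    AdjDown (StrictHit (negSet i (PiAt Γ i.1)) i z (min a (ubE (PiAt Γ i.1) i z)))
      (min a (ubE (PiAt Γ i.1) i z))
      (lbE (PiAt Γ i.1) i z) (ubE (PiAt Γ i.1) i z) e2 ((z i : ℝ) : EReal)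

/-- `z` is the output of the constraint layer on input `xt` for the explicit
admissible choice `ε₁, ε₂` of the `ε` values. -/
def IsCLE (Γ : Set (LinConstr D)) (xt z : Fin D → ℝ) (ε₁ ε₂ : Fin D → ℝ) : Prop :=
  ∀ i : Fin D, IsCLStepE Γ xt z (ε₁ i) (ε₂ i) i

/-- `z = CL(xt)` for some admissible choice of the `ε` values. -/
def IsCL (Γ : Set (LinConstr D)) (xt z : Fin D → ℝ) : Prop :=
  ∃ ε₁ ε₂ : Fin D → ℝ, IsCLE Γ xt z ε₁ ε₂

/-- The `i`-th step holds for some admissible `ε` values. -/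
def IsCLStep (Γ : Set (LinConstr D)) (xt z : Fin D → ℝ) (i : Fin D) : Prop :=
  ∃ e1 e2 : ℝ, IsCLStepE Γ xt z e1 e2 i

/-- `z` is optimal for `xt` with respect to `Γ`. -/
def Optimal (Γ : Set (LinConstr D)) (xt z : Fin D → ℝ) : Prop :=
  SatSet Γ z ∧
    ¬ ∃ x' : Fin D → ℝ, x' ≠ z ∧ SatSet Γ x' ∧ ∀ i, |x' i - xt i| ≤ |z i - xt i|

/-- Replace a (possibly strict) constraint by its non-strict version. -/
def toGe (φ : LinConstr D) : LinConstr D := { φ with strict := false }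

/-- `Π^≥`: every strict constraint replaced by its non-strict version. -/
def PiGe (Γ : Set (LinConstr D)) : Set (LinConstr D) := toGe '' Γ

/-- The deterministic constraint layer in the absence of strict constraints:
`CLns Γ xt i = min(max(xt_i, lb_i), ub_i)`, the bounds being computed from
`PiAt Γ i` at the previously computed coordinates. -/
noncomputable def CLns (Γ : Set (LinConstr D)) (xt : Fin D → ℝ) (i : Fin D) : ℝ :=
  (min (max ((xt i : ℝ) : EReal)
        (lbE (PiAt Γ i.1) i (fun k => if h : (k : ℕ) < (i : ℕ) then CLns Γ xt k else 0)))
      (ubE (PiAt Γ i.1) i (fun k => if h : (k : ℕ) < (i : ℕ) then CLns Γ xt k else 0))).toReal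
termination_by (i : ℕ)
decreasing_by all_goals exact h

/-! ### Auxiliary lemmas for `clns_sat` -/

section Aux

lemma aux_sum_split (φ : LinConstr D) (j : Fin D) (x : Fin D → ℝ) :
    (∑ k, φ.w k * x k) + φ.b
      = φ.w j * x j + ((∑ k ∈ Finset.univ.erase j, φ.w k * x k) + φ.b) := by
  rw [← Finset.add_sum_erase _ _ (Finset.mem_univ j)]
  ring

lemma aux_eps_def (φ : LinConstr D) (j : Fin D) (x : Fin D → ℝ) :
    eps φ j x = -((∑ k ∈ Finset.univ.erase j, φ.w k * x k) + φ.b) / φ.w j := by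
  unfold eps
  rw [neg_add, _root_.add_div, neg_div, neg_div, ← sub_eq_add_neg, Finset.sum_div]
  congr 1
  rw [neg_inj]
  exact Finset.sum_congr rfl fun k _ => div_mul_eq_mul_div _ _ _

lemma aux_sat_neg (φ : LinConstr D) (hs : φ.strict = false) (j : Fin D) (x : Fin D → ℝ)
    (hw : φ.w j < 0) : φ.Sat x ↔ x j ≤ eps φ j x := by
  unfold Sat
  rw [hs, if_neg (by simp), aux_sum_split φ j x, aux_eps_def, le_div_iff_of_neg hw]
  constructor <;> intro h <;> nlinarith

lemma aux_sat_pos (φ : LinConstr D) (hs : φ.strict = false) (j : Fin D) (x : Fin D → ℝ)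
    (hw : 0 < φ.w j) : φ.Sat x ↔ eps φ j x ≤ x j := by
  unfold Sat
  rw [hs, if_neg (by simp), aux_sum_split φ j x, aux_eps_def, div_le_iff₀ hw]
  constructor <;> intro h <;> nlinarith

lemma aux_eps_congr (φ : LinConstr D) (j : Fin D) (x y : Fin D → ℝ)
    (h : ∀ k, k ≠ j → φ.w k ≠ 0 → x k = y k) : eps φ j x = eps φ j y := by
  unfold eps
  congr 1
  rw [neg_inj]
  refine Finset.sum_congr rfl fun k hk => ?_
  rw [Finset.mem_erase] at hk
  by_cases hw : φ.w k = 0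
  · simp [hw]
  · rw [h k hk.1 hw]

lemma aux_red_val (j : Fin D) (φ1 φ2 : LinConstr D) (x : Fin D → ℝ) :
    (∑ k, (red j φ1 φ2).w k * x k) + (red j φ1 φ2).b
      = |φ2.w j| * ((∑ k ∈ Finset.univ.erase j, φ1.w k * x k) + φ1.b)
        + |φ1.w j| * ((∑ k ∈ Finset.univ.erase j, φ2.w k * x k) + φ2.b) := by
  have hsum : (∑ k, (red j φ1 φ2).w k * x k)
      = ∑ k ∈ Finset.univ.erase j,
          (|φ2.w j| * (φ1.w k * x k) + |φ1.w j| * (φ2.w k * x k)) := by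
    rw [← Finset.add_sum_erase _ _ (Finset.mem_univ j)]
    have h0 : (red j φ1 φ2).w j * x j = 0 := by simp [red]
    rw [h0, zero_add]
    refine Finset.sum_congr rfl fun k hk => ?_
    rw [Finset.mem_erase] at hk
    simp only [red, if_neg hk.1]
    ring
  rw [hsum, Finset.sum_add_distrib, ← Finset.mul_sum, ← Finset.mul_sum]
  simp only [red]
  ring

lemma aux_red_sat (j : Fin D) (φ1 φ2 : LinConstr D) (x : Fin D → ℝ)
    (h1 : φ1.Sat x) (h2 : φ2.Sat x) (hn1 : φ1.strict = false) (hn2 : φ2.strict = false)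
    (hw1 : φ1.w j < 0) (hw2 : 0 < φ2.w j) : (red j φ1 φ2).Sat x := by
  have hstr : (red j φ1 φ2).strict = false := by simp [red, hn1, hn2]
  unfold Sat at *
  rw [hn1, if_neg (by simp)] at h1
  rw [hn2, if_neg (by simp)] at h2
  rw [hstr, if_neg (by simp), aux_red_val]
  rw [aux_sum_split φ1 j x] at h1
  rw [aux_sum_split φ2 j x] at h2
  rw [abs_of_neg hw1, abs_of_pos hw2]
  nlinarith [mul_nonneg hw2.le h1, mul_nonneg (by linarith : (0:ℝ) ≤ -φ1.w j) h2]

lemma aux_red_eps (j : Fin D) (φ1 φ2 : LinConstr D) (x : Fin D → ℝ)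
    (h : (red j φ1 φ2).Sat x) (hw1 : φ1.w j < 0) (hw2 : 0 < φ2.w j) :
    eps φ2 j x ≤ eps φ1 j x := by
  have hv : 0 ≤ (∑ k, (red j φ1 φ2).w k * x k) + (red j φ1 φ2).b := by
    unfold Sat at h
    split_ifs at h
    · linarith
    · exact h
  rw [aux_red_val, abs_of_neg hw1, abs_of_pos hw2] at hv
  rw [aux_eps_def, aux_eps_def, le_div_iff_of_neg hw1, div_mul_eq_mul_div,
    le_div_iff₀ hw2]
  nlinarith

lemma aux_mem_elim_left {j : Fin D} {S : Set (LinConstr D)} {φ : LinConstr D}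
    (hφ : φ ∈ S) (hw : φ.w j = 0) : φ ∈ elim j S := by
  left
  refine ⟨hφ, fun hc => ?_⟩
  rcases hc with h | h
  · exact absurd hw (ne_of_lt h.2)
  · exact absurd hw (ne_of_gt h.2)

lemma aux_elim_finite (j : Fin D) {S : Set (LinConstr D)} (hS : S.Finite) :
    (elim j S).Finite := by
  apply Set.Finite.union
  · exact hS.subset Set.diff_subset
  · have heq : {ψ | ∃ φ1 ∈ negSet j S, ∃ φ2 ∈ posSet j S, ψ = red j φ1 φ2}
        = Set.image2 (red j) (negSet j S) (posSet j S) := by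
      ext ψ
      simp only [Set.mem_setOf_eq, Set.mem_image2]
      constructor
      · rintro ⟨a, ha, b, hb, rfl⟩; exact ⟨a, ha, b, hb, rfl⟩
      · rintro ⟨a, ha, b, hb, rfl⟩; exact ⟨a, ha, b, hb, rfl⟩
    rw [heq]
    exact Set.Finite.image2 _ (hS.subset fun φ h => h.1) (hS.subset fun φ h => h.1)

lemma aux_elim_nonstrict (j : Fin D) {S : Set (LinConstr D)}
    (h : ∀ φ ∈ S, φ.strict = false) : ∀ φ ∈ elim j S, φ.strict = false := by
  rintro φ (⟨hφ, -⟩ | ⟨φ1, h1, φ2, h2, rfl⟩)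
  · exact h φ hφ
  · simp [red, h φ1 h1.1, h φ2 h2.1]

lemma aux_elim_sat (j : Fin D) {S : Set (LinConstr D)}
    (hns : ∀ φ ∈ S, φ.strict = false) {x : Fin D → ℝ} (hx : SatSet S x) :
    SatSet (elim j S) x := by
  rintro φ (⟨hφ, -⟩ | ⟨φ1, h1, φ2, h2, rfl⟩)
  · exact hx φ hφ
  · exact aux_red_sat j φ1 φ2 x (hx φ1 h1.1) (hx φ2 h2.1) (hns φ1 h1.1) (hns φ2 h2.1)
      h1.2 h2.2

lemma piAt_eq (Γ : Set (LinConstr D)) (n : ℕ) :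
    PiAt Γ n = if h : n + 1 < D then elim ⟨n+1, h⟩ (PiAt Γ (n+1)) else Γ := by
  conv_lhs => rw [PiAt]

lemma piAt_finite (Γ : Set (LinConstr D)) (hfin : Γ.Finite) (n : ℕ) :
    (PiAt Γ n).Finite := by
  rw [piAt_eq]
  split
  · next h => exact aux_elim_finite _ (piAt_finite Γ hfin (n+1))
  · exact hfin
termination_by D - n
decreasing_by omega

lemma piAt_nonstrict (Γ : Set (LinConstr D)) (hns : ∀ φ ∈ Γ, φ.strict = false) (n : ℕ) :
    ∀ φ ∈ PiAt Γ n, φ.strict = false := by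
  rw [piAt_eq]
  split
  · next h => exact aux_elim_nonstrict _ (piAt_nonstrict Γ hns (n+1))
  · exact hns
termination_by D - n
decreasing_by omega

lemma piAt_sat (Γ : Set (LinConstr D)) (hns : ∀ φ ∈ Γ, φ.strict = false)
    (x : Fin D → ℝ) (hx : SatSet Γ x) (n : ℕ) : SatSet (PiAt Γ n) x := by
  rw [piAt_eq]
  split
  · next h =>
    exact aux_elim_sat _ (piAt_nonstrict Γ hns (n+1)) (piAt_sat Γ hns x hx (n+1))
  · exact hx
termination_by D - n
decreasing_by omega

lemma piAt_zero (Γ : Set (LinConstr D)) (n : ℕ) :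
    ∀ φ ∈ PiAt Γ n, ∀ k : Fin D, n < (k : ℕ) → φ.w k = 0 := by
  rw [piAt_eq]
  split
  · next h =>
    rintro φ (⟨hφ, hnm⟩ | ⟨φ1, h1, φ2, h2, rfl⟩) k hk
    · rcases Nat.lt_or_ge (n+1) (k : ℕ) with h' | h'
      · exact piAt_zero Γ (n+1) φ hφ k h'
      · have hkeq : k = ⟨n+1, h⟩ := Fin.ext (show (k : ℕ) = n + 1 by omega)
        rw [hkeq]
        by_contra hw
        rcases lt_trichotomy (φ.w ⟨n+1, h⟩) 0 with h0 | h0 | h0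
        · exact hnm (Or.inl ⟨hφ, h0⟩)
        · exact hw h0
        · exact hnm (Or.inr ⟨hφ, h0⟩)
    · simp only [red]
      by_cases hkj : k = ⟨n+1, h⟩
      · simp [hkj]
      · rw [if_neg hkj]
        have hk1 : n + 1 < (k : ℕ) := by
          rcases Nat.lt_or_ge (n+1) (k : ℕ) with h' | h'
          · exact h'
          · exact absurd (Fin.ext (show (k : ℕ) = n + 1 by omega) : k = ⟨n+1, h⟩) hkj
        rw [piAt_zero Γ (n+1) φ1 h1.1 k hk1, piAt_zero Γ (n+1) φ2 h2.1 k hk1]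
        ring
  · next h =>
    intro φ _ k hk
    exact absurd k.isLt (by omega)
termination_by D - n
decreasing_by all_goals omega

lemma aux_sSup_ne_top {A : Set EReal} (hA : A.Finite) (h : ∀ a ∈ A, a ≠ ⊤) :
    sSup A ≠ ⊤ := by
  rcases A.eq_empty_or_nonempty with rfl | hne
  · simp
  · exact h _ (hne.csSup_mem hA)

lemma aux_sInf_ne_bot {A : Set EReal} (hA : A.Finite) (h : ∀ a ∈ A, a ≠ ⊥) :
    sInf A ≠ ⊥ := by
  rcases A.eq_empty_or_nonempty with rfl | hne
  · simp
  · exact h _ (hne.csInf_mem hA)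

lemma lbE_ne_top {S : Set (LinConstr D)} (hS : S.Finite) (i : Fin D) (x : Fin D → ℝ) :
    lbE S i x ≠ ⊤ := by
  apply aux_sSup_ne_top ((hS.subset fun φ h => h.1).image _)
  rintro a ⟨φ, -, rfl⟩
  exact EReal.coe_ne_top _

lemma ubE_ne_bot {S : Set (LinConstr D)} (hS : S.Finite) (i : Fin D) (x : Fin D → ℝ) :
    ubE S i x ≠ ⊥ := by
  apply aux_sInf_ne_bot ((hS.subset fun φ h => h.1).image _)
  rintro a ⟨φ, -, rfl⟩
  exact EReal.coe_ne_bot _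

lemma aux_eps_trunc (Γ : Set (LinConstr D)) (xt : Fin D → ℝ) (i : Fin D)
    {φ : LinConstr D} (hφ : φ ∈ PiAt Γ i.1) :
    eps φ i (fun k => if h : (k : ℕ) < (i : ℕ) then CLns Γ xt k else 0)
      = eps φ i (CLns Γ xt) := by
  apply aux_eps_congr
  intro k hk hw
  have hkle : (k : ℕ) ≤ (i : ℕ) := by
    by_contra hc
    exact hw (piAt_zero Γ i.1 φ hφ k (by omega))
  have hklt : (k : ℕ) < (i : ℕ) := by
    rcases Nat.lt_or_ge (k : ℕ) (i : ℕ) with h' | h'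
    · exact h'
    · exact absurd (Fin.ext (by omega : (k : ℕ) = (i : ℕ))) hk
  rw [dif_pos hklt]

lemma lbE_trunc (Γ : Set (LinConstr D)) (xt : Fin D → ℝ) (i : Fin D) :
    lbE (PiAt Γ i.1) i (fun k => if h : (k : ℕ) < (i : ℕ) then CLns Γ xt k else 0)
      = lbE (PiAt Γ i.1) i (CLns Γ xt) := by
  unfold lbE
  congr 1
  apply Set.image_congr
  intro φ hφ
  rw [aux_eps_trunc Γ xt i hφ.1]

lemma ubE_trunc (Γ : Set (LinConstr D)) (xt : Fin D → ℝ) (i : Fin D) :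
    ubE (PiAt Γ i.1) i (fun k => if h : (k : ℕ) < (i : ℕ) then CLns Γ xt k else 0)
      = ubE (PiAt Γ i.1) i (CLns Γ xt) := by
  unfold ubE
  congr 1
  apply Set.image_congr
  intro φ hφ
  rw [aux_eps_trunc Γ xt i hφ.1]

lemma clns_coe (Γ : Set (LinConstr D)) (hfin : Γ.Finite) (xt : Fin D → ℝ) (i : Fin D) :
    ((CLns Γ xt i : ℝ) : EReal)
      = min (max ((xt i : ℝ) : EReal) (lbE (PiAt Γ i.1) i (CLns Γ xt)))
          (ubE (PiAt Γ i.1) i (CLns Γ xt)) := by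
  have hL := lbE_ne_top (piAt_finite Γ hfin i.1) i (CLns Γ xt)
  have hU := ubE_ne_bot (piAt_finite Γ hfin i.1) i (CLns Γ xt)
  conv_lhs => rw [CLns]
  rw [lbE_trunc, ubE_trunc]
  have ha : max ((xt i : ℝ) : EReal) (lbE (PiAt Γ i.1) i (CLns Γ xt)) < ⊤ :=
    max_lt (EReal.coe_lt_top _) (lt_top_iff_ne_top.2 hL)
  have hmt : min (max ((xt i : ℝ) : EReal) (lbE (PiAt Γ i.1) i (CLns Γ xt)))
      (ubE (PiAt Γ i.1) i (CLns Γ xt)) < ⊤ := lt_of_le_of_lt (min_le_left _ _) ha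
  have hmb : (⊥ : EReal) < min (max ((xt i : ℝ) : EReal) (lbE (PiAt Γ i.1) i (CLns Γ xt)))
      (ubE (PiAt Γ i.1) i (CLns Γ xt)) :=
    lt_min (lt_of_lt_of_le (EReal.bot_lt_coe _) (le_max_left _ _))
      (bot_lt_iff_ne_bot.2 hU)
  exact EReal.coe_toReal hmt.ne hmb.ne'

lemma keystep (Γ : Set (LinConstr D)) (hfin : Γ.Finite)
    (hns : ∀ φ ∈ Γ, φ.strict = false) (xt : Fin D → ℝ) (i : Fin D)
    (hLU : lbE (PiAt Γ i.1) i (CLns Γ xt) ≤ ubE (PiAt Γ i.1) i (CLns Γ xt))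
    (hw0 : ∀ φ ∈ PiAt Γ i.1, φ.w i = 0 → φ.Sat (CLns Γ xt)) :
    SatSet (PiAt Γ i.1) (CLns Γ xt) := by
  set z := CLns Γ xt with hz
  have hc := clns_coe Γ hfin xt i
  have hzL : lbE (PiAt Γ i.1) i z ≤ ((z i : ℝ) : EReal) := by
    rw [hc]
    exact le_min (le_trans (le_max_right _ _) (le_refl _)) hLU
  have hzU : ((z i : ℝ) : EReal) ≤ ubE (PiAt Γ i.1) i z := by
    rw [hc]; exact min_le_right _ _
  intro φ hφ
  rcases lt_trichotomy (φ.w i) 0 with h0 | h0 | h0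
  · rw [aux_sat_neg φ (piAt_nonstrict Γ hns i.1 φ hφ) i z h0]
    have hmem : ((eps φ i z : ℝ) : EReal)
        ∈ (fun ψ => ((eps ψ i z : ℝ) : EReal)) '' negSet i (PiAt Γ i.1) :=
      ⟨φ, ⟨hφ, h0⟩, rfl⟩
    have : ((z i : ℝ) : EReal) ≤ ((eps φ i z : ℝ) : EReal) :=
      le_trans hzU (sInf_le hmem)
    exact_mod_cast this
  · exact hw0 φ hφ h0
  · rw [aux_sat_pos φ (piAt_nonstrict Γ hns i.1 φ hφ) i z h0]
    have hmem : ((eps φ i z : ℝ) : EReal)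
        ∈ (fun ψ => ((eps ψ i z : ℝ) : EReal)) '' posSet i (PiAt Γ i.1) :=
      ⟨φ, ⟨hφ, h0⟩, rfl⟩
    have : ((eps φ i z : ℝ) : EReal) ≤ ((z i : ℝ) : EReal) :=
      le_trans (le_sSup hmem) hzL
    exact_mod_cast this

end Aux

end LinConstr

open LinConstr

/-- If `Γ` is a satisfiable finite set of non-strict linear
constraints, then for every `x̃` the point `z` defined recursively by
`z_i = min(max(x̃_i, lb_i), ub_i)` — where `ub_i` (resp. `lb_i`) is the min (resp. max)
of the `ε^φ_i(z)` over `Π⁻_i` (resp. `Π⁺_i`), depending only on `z_1, …, z_{i−1}` —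
satisfies `Γ`. -/
theorem clns_sat {D : ℕ} (Γ : Set (LinConstr D)) (hfin : Γ.Finite)
    (hsat : ∃ x : Fin D → ℝ, SatSet Γ x)
    (hns : ∀ φ ∈ Γ, φ.strict = false) (xt : Fin D → ℝ) :
    SatSet Γ (CLns Γ xt) := by
  rcases hsat with ⟨x, hx⟩
  have main : ∀ n, n < D → SatSet (PiAt Γ n) (CLns Γ xt) := by
    intro n
    induction n with
    | zero =>
      intro h0
      have hsatx : SatSet (PiAt Γ 0) x := piAt_sat Γ hns x hx 0
      have hepsx : ∀ φ ∈ PiAt Γ 0, eps φ ⟨0, h0⟩ (CLns Γ xt) = eps φ ⟨0, h0⟩ x := by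
        intro φ hφ
        apply aux_eps_congr
        intro k hk hwk
        have hkpos : 0 < (k : ℕ) :=
          Nat.pos_of_ne_zero fun hc => hk (Fin.ext hc)
        exact absurd (piAt_zero Γ 0 φ hφ k hkpos) hwk
      apply keystep Γ hfin hns xt ⟨0, h0⟩
      · apply sSup_le
        rintro a ⟨φ2, h2, rfl⟩
        apply le_sInf
        rintro b ⟨φ1, h1, rfl⟩
        apply EReal.coe_le_coe_iff.2
        rw [hepsx φ1 h1.1, hepsx φ2 h2.1]
        have hx2 := (aux_sat_pos φ2 (piAt_nonstrict Γ hns 0 φ2 h2.1) ⟨0, h0⟩ x h2.2).1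
          (hsatx φ2 h2.1)
        have hx1 := (aux_sat_neg φ1 (piAt_nonstrict Γ hns 0 φ1 h1.1) ⟨0, h0⟩ x h1.2).1
          (hsatx φ1 h1.1)
        linarith
      · intro φ hφ hw
        have hzero : ∀ k, φ.w k = 0 := by
          intro k
          rcases Nat.eq_zero_or_pos (k : ℕ) with hk | hk
          · have : k = ⟨0, h0⟩ := Fin.ext hk
            rw [this]; exact hw
          · exact piAt_zero Γ 0 φ hφ k hk
        have hsx := hsatx φ hφ
        unfold Sat at hsx ⊢
        simp only [hzero, zero_mul, Finset.sum_const_zero] at hsx ⊢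
        exact hsx
    | succ m IH =>
      intro hm1
      have hm : m < D := by omega
      have hel : PiAt Γ m = elim ⟨m+1, hm1⟩ (PiAt Γ (m+1)) := by
        rw [piAt_eq, dif_pos hm1]
      have IH' : SatSet (elim ⟨m+1, hm1⟩ (PiAt Γ (m+1))) (CLns Γ xt) := hel ▸ IH hm
      apply keystep Γ hfin hns xt ⟨m+1, hm1⟩
      · apply sSup_le
        rintro a ⟨φ2, h2, rfl⟩
        apply le_sInf
        rintro b ⟨φ1, h1, rfl⟩
        apply EReal.coe_le_coe_iff.2
        have hred : (red ⟨m+1, hm1⟩ φ1 φ2).Sat (CLns Γ xt) :=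
          IH' _ (Or.inr ⟨φ1, h1, φ2, h2, rfl⟩)
        exact aux_red_eps _ φ1 φ2 _ hred h1.2 h2.2
      · intro φ hφ hw
        exact IH' φ (aux_mem_elim_left hφ hw)
  rcases Nat.eq_zero_or_pos D with hD | hD
  · intro φ hφ
    have hzx : CLns Γ xt = x := funext fun k => absurd k.isLt (by omega)
    rw [hzx]
    exact hx φ hφ
  · have h1 : PiAt Γ (D - 1) = Γ := by
      rw [piAt_eq, dif_neg (by omega)]
    have := main (D - 1) (by omega)
    rwa [h1] at this
end

section
/- Let Π' be a finite set of linear constraints over ℝ^D, let j be an index, and let Π'⁻ (resp. Π'⁺) be the set of constraints of Π' in which x_j appears negatively (resp. positively). Suppose a point x ∈ ℝ^D satisfies red_j(φ¹, φ²) for every φ¹ ∈ Π'⁻ and φ² ∈ Π'⁺. Set ub = min{ε^φ_j(x) : φ ∈ Π'⁻} (equal to +∞ if Π'⁻ is empty) and lb = max{ε^φ_j(x) : φ ∈ Π'⁺} (equal to −∞ if Π'⁺ is empty). Then lb ≤ ub; moreover, if lb = ub (both finite), then every φ¹ ∈ Π'⁻ with ε^{φ¹}_j(x) = ub and every φ²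 ∈ Π'⁺ with ε^{φ²}_j(x) = lb is a non-strict inequality. -/
open scoped BigOperators

open LinConstr

/-!
Without its `x_j` term, the linear form of `φ` equals `−w_j · ε^φ_j(x)`, so the linear form of
`red_j(φ¹, φ²)` is `w¹_j · w²_j · (ε^{φ²}_j(x) − ε^{φ¹}_j(x))`. As `w¹_j · w²_j < 0`, satisfying
the reduction means `ε^{φ²}_j(x) ≤ ε^{φ¹}_j(x)`, strictly when `φ¹` or `φ²` is strict. This gives
`lb ≤ ub`. When `lb = ub`, finiteness of `Π'` makes the opposite bound attained by some
constraint, and a strict constraint attaining its own bound would then violate the strict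
inequality.
-/

open Finset

namespace LinConstr

variable {D : ℕ}

theorem sum_erase_mul_add_eq_neg_mul_eps (φ : LinConstr D) (j : Fin D) (x : Fin D → ℝ)
    (hj : φ.w j ≠ 0) :
    ∑ k ∈ univ.erase j, φ.w k * x k + φ.b = -φ.w j * eps φ j x := by
  have hsum : φ.w j * ∑ k ∈ univ.erase j, φ.w k / φ.w j * x k =
      ∑ k ∈ univ.erase j, φ.w k * x k := by
    rw [mul_sum]
    exact sum_congr rfl fun k _ => by field_simp
  rw [eps, ← hsum]
  field_simp
  ring

theorem red_sum_mul_add (j : Fin D) (φ1 φ2 : LinConstr D) (x : Fin D → ℝ) :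
    ∑ k, (red j φ1 φ2).w k * x k + (red j φ1 φ2).b =
      (∑ k ∈ univ.erase j, φ1.w k * x k + φ1.b) * |φ2.w j| +
        (∑ k ∈ univ.erase j, φ2.w k * x k + φ2.b) * |φ1.w j| := by
  rw [← sum_erase_add _ _ (mem_univ j)]
  have hsum : ∑ k ∈ univ.erase j, (red j φ1 φ2).w k * x k =
      ∑ k ∈ univ.erase j, (φ1.w k * x k * |φ2.w j| + φ2.w k * x k * |φ1.w j|) :=
    sum_congr rfl fun k hk => by simp only [red, if_neg (ne_of_mem_erase hk)]; ring
  rw [hsum, sum_add_distrib, ← sum_mul, ← sum_mul]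
  simp only [red, ↓reduceIte]
  ring

theorem red_sum_mul_add_eq_mul_sub_eps (j : Fin D) {φ1 φ2 : LinConstr D} (x : Fin D → ℝ)
    (h1 : φ1.w j < 0) (h2 : 0 < φ2.w j) :
    ∑ k, (red j φ1 φ2).w k * x k + (red j φ1 φ2).b =
      φ1.w j * φ2.w j * (eps φ2 j x - eps φ1 j x) := by
  rw [red_sum_mul_add, sum_erase_mul_add_eq_neg_mul_eps φ1 j x h1.ne,
    sum_erase_mul_add_eq_neg_mul_eps φ2 j x h2.ne', abs_of_neg h1, abs_of_pos h2]
  ring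

theorem eps_le_of_red_sat {j : Fin D} {φ1 φ2 : LinConstr D} {x : Fin D → ℝ}
    (h1 : φ1.w j < 0) (h2 : 0 < φ2.w j) (hsat : (red j φ1 φ2).Sat x) :
    eps φ2 j x ≤ eps φ1 j x := by
  have hneg : φ1.w j * φ2.w j < 0 := mul_neg_of_neg_of_pos h1 h2
  unfold Sat at hsat
  rw [red_sum_mul_add_eq_mul_sub_eps j x h1 h2] at hsat
  split_ifs at hsat <;> nlinarith

theorem eps_lt_of_red_sat {j : Fin D} {φ1 φ2 : LinConstr D} {x : Fin D → ℝ}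
    (h1 : φ1.w j < 0) (h2 : 0 < φ2.w j) (hsat : (red j φ1 φ2).Sat x)
    (hstrict : (red j φ1 φ2).strict = true) :
    eps φ2 j x < eps φ1 j x := by
  have hneg : φ1.w j * φ2.w j < 0 := mul_neg_of_neg_of_pos h1 h2
  rw [Sat, if_pos hstrict, red_sum_mul_add_eq_mul_sub_eps j x h1 h2] at hsat
  nlinarith

theorem lbE_le_ubE {S : Set (LinConstr D)} {j : Fin D} {x : Fin D → ℝ}
    (h : ∀ φ1 ∈ negSet j S, ∀ φ2 ∈ posSet j S, eps φ2 j x ≤ eps φ1 j x) :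
    lbE S j x ≤ ubE S j x :=
  sSup_le <| Set.forall_mem_image.2 fun _φ2 h2 =>
    le_sInf <| Set.forall_mem_image.2 fun _φ1 h1 => EReal.coe_le_coe (h _ h1 _ h2)

end LinConstr

theorem Set.Finite.exists_mem_eq_of_sSup_image_eq {α : Type*} {S : Set α} (hS : S.Finite)
    {f : α → ℝ} {r : ℝ} (h : sSup ((fun a => (f a : EReal)) '' S) = r) :
    ∃ a ∈ S, f a = r := by
  have hne : ((fun a => (f a : EReal)) '' S).Nonempty := by
    by_contra hempty
    rw [Set.not_nonempty_iff_eq_empty.1 hempty, sSup_empty] at h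
    exact EReal.bot_ne_coe r h
  obtain ⟨a, ha, hfa⟩ := hne.csSup_mem (hS.image _)
  exact ⟨a, ha, EReal.coe_eq_coe_iff.1 (hfa.trans h)⟩

theorem Set.Finite.exists_mem_eq_of_sInf_image_eq {α : Type*} {S : Set α} (hS : S.Finite)
    {f : α → ℝ} {r : ℝ} (h : sInf ((fun a => (f a : EReal)) '' S) = r) :
    ∃ a ∈ S, f a = r := by
  have hne : ((fun a => (f a : EReal)) '' S).Nonempty := by
    by_contra hempty
    rw [Set.not_nonempty_iff_eq_empty.1 hempty, sInf_empty] at h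
    exact EReal.top_ne_coe r h
  obtain ⟨a, ha, hfa⟩ := hne.csInf_mem (hS.image _)
  exact ⟨a, ha, EReal.coe_eq_coe_iff.1 (hfa.trans h)⟩


/-- If a point `x` satisfies every reduction `red_j(φ1, φ2)` with
`φ1 ∈ Γ'⁻`, `φ2 ∈ Γ'⁺`, then the bounds `lb = max {ε^φ_j(x) : φ ∈ Γ'⁺}` and
`ub = min {ε^φ_j(x) : φ ∈ Γ'⁻}` satisfy `lb ≤ ub`; moreover if `lb = ub` then every
constraint of `Γ'⁻` (resp. `Γ'⁺`) attaining `ub` (resp. `lb`) is non-strict. -/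
theorem bounds_le_of_red_sat {D : ℕ} (Γ' : Set (LinConstr D)) (hfin : Γ'.Finite)
    (j : Fin D) (x : Fin D → ℝ)
    (hred : ∀ φ1 ∈ negSet j Γ', ∀ φ2 ∈ posSet j Γ', (red j φ1 φ2).Sat x) :
    lbE Γ' j x ≤ ubE Γ' j x ∧
      (lbE Γ' j x = ubE Γ' j x →
        (∀ φ1 ∈ negSet j Γ', ((eps φ1 j x : ℝ) : EReal) = ubE Γ' j x →
          φ1.strict = false) ∧
        (∀ φ2 ∈ posSet j Γ', ((eps φ2 j x : ℝ) : EReal) = lbE Γ' j x →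
          φ2.strict = false)) := by
  have hlt : ∀ φ1 ∈ negSet j Γ', ∀ φ2 ∈ posSet j Γ', (φ1.strict || φ2.strict) = true →
      eps φ2 j x < eps φ1 j x :=
    fun φ1 h1 φ2 h2 => eps_lt_of_red_sat h1.2 h2.2 (hred φ1 h1 φ2 h2)
  refine ⟨lbE_le_ubE fun φ1 h1 φ2 h2 => eps_le_of_red_sat h1.2 h2.2 (hred φ1 h1 φ2 h2),
    fun heq => ⟨fun φ1 h1 hub => ?_, fun φ2 h2 hlb => ?_⟩⟩
  · obtain ⟨φ2, h2, he⟩ := (hfin.subset fun _ h => h.1).exists_mem_eq_of_sSup_image_eq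
      (heq.trans hub.symm)
    by_contra hs
    exact (hlt φ1 h1 φ2 h2 (by simp [hs])).ne he
  · obtain ⟨φ1, h1, he⟩ := (hfin.subset fun _ h => h.1).exists_mem_eq_of_sInf_image_eq
      (heq.symm.trans hlb.symm)
    by_contra hs
    exact (hlt φ1 h1 φ2 h2 (by simp [hs])).ne' he
end
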